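/- Let X : Ω → ℝⁿ and ε : Ω → ℝᵐ be square-integrable random vectors on a probability space, with X and ε independent and E[ε] = 0. Let F ∈ ℝ^{m×n}, set Y = F X + ε, μ_X = E[X], S_X = Cov(X), and S_Y = Cov(Y), and suppose K_Y has full column rank with S_Y = K_Y K_Yᵀ. Let M be a best rank-≤r approximation of S_X Fᵀ (K_Y†)ᵀ in the Frobenius norm, set Â = M K_Y† and b̂ = (Iₙ − Â F) μ_X. Then rank(Â) ≤ r and for every A ∈ ℝ^{n×m} with rank(A) ≤ r and every b ∈ ℝⁿ, E‖Â Y + b̂ − X‖₂² ≤ E‖A Y + b − X‖₂². -/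

import Mathlib

/-!
Write `Y = F X + ε`, `S_X = Cov X`, `S_ε = Cov ε` and `G = S_X Fᵀ (K_Y†)ᵀ`. For any `A, b` the
error `A Y + b − X` is `(A F − I) X + A ε + b`, so by independence
`E‖A Y + b − X‖² = tr((A F − I) S_X (A F − I)ᵀ + A S_ε Aᵀ) + ‖(A F − I) μ_X + b‖²`.
Since `K_Y K_Yᵀ = F S_X Fᵀ + S_ε` with both summands positive semidefinite, the columns of
`F S_X` lie in the column space of `K_Y`, i.e. `K_Y K_Y† F S_X = F S_X`; this turns the trace
into `‖A K_Y − G‖_F² − ‖G‖_F² + tr S_X`. As `K_Y` has full column rank, `K_Y† K_Y = I`, so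
`Â K_Y = M`, which minimises the first term among ranks `≤ r`, and `b̂` kills the bias term.
-/

open Matrix MeasureTheory

/-- Covariance matrix `E[(Z − E Z)(Z − E Z)ᵀ]` of a random vector. -/
noncomputable def covMatrix {Ω : Type} [MeasurableSpace Ω] (μ : Measure Ω)
    {n : ℕ} (Z : Ω → Fin n → ℝ) : Matrix (Fin n) (Fin n) ℝ :=
  Matrix.of fun i j =>
    ∫ ω, (Z ω i - ∫ ω', Z ω' i ∂μ) * (Z ω j - ∫ ω', Z ω' j ∂μ) ∂μ

/-- Frobenius norm of a real matrix. -/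
noncomputable def frob {m n : ℕ} (A : Matrix (Fin m) (Fin n) ℝ) : ℝ :=
  Real.sqrt (∑ i, ∑ j, (A i j) ^ 2)

/-- `Ad` is the Moore–Penrose pseudoinverse of `A` (the four Penrose conditions). -/
def IsMoorePenrose {m n : ℕ} (A : Matrix (Fin m) (Fin n) ℝ)
    (Ad : Matrix (Fin n) (Fin m) ℝ) : Prop :=
  A * Ad * A = A ∧ Ad * A * Ad = Ad ∧ (A * Ad)ᵀ = A * Ad ∧ (Ad * A)ᵀ = Ad * A

namespace Matrix

variable {m n p : Type*} [Fintype n] [Fintype p]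

section RCLike

variable {𝕜 : Type*} [RCLike 𝕜]

open scoped ComplexOrder MatrixOrder in
theorem PosSemidef.mul_eq_zero_of_mul_mul_conjTranspose_eq_zero {S : Matrix n n 𝕜}
    (hS : S.PosSemidef) {B : Matrix m n 𝕜} (h : B * S * Bᴴ = 0) : B * S = 0 := by
  classical
  obtain ⟨R, rfl⟩ := CStarAlgebra.nonneg_iff_eq_star_mul_self.mp hS.nonneg
  rw [star_eq_conjTranspose] at h ⊢
  rw [mul_conjTranspose_mul_self_eq_zero, ← self_mul_conjTranspose_eq_zero]
  simpa only [conjTranspose_mul, conjTranspose_conjTranspose, Matrix.mul_assoc] using h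

open scoped ComplexOrder MatrixOrder in
/-- The columns of `F S` lie in the column space of `K`, on which `K Kd` acts as the identity. -/
theorem mul_mul_mul_eq_of_mul_conjTranspose_eq_add [Fintype m] [DecidableEq m]
    {K : Matrix m p 𝕜} {Kd : Matrix p m 𝕜} {F : Matrix m n 𝕜} {S : Matrix n n 𝕜}
    {T : Matrix m m 𝕜} (hKd : K * Kd * K = K) (hS : S.PosSemidef) (hT : T.PosSemidef)
    (hK : K * Kᴴ = F * S * Fᴴ + T) : K * Kd * (F * S) = F * S := by
  set P := 1 - K * Kd
  have hPK : P * K = 0 := by rw [Matrix.sub_mul, hKd, Matrix.one_mul, sub_self]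
  have hsum : P * F * S * (P * F)ᴴ + P * T * Pᴴ = 0 := by
    calc P * F * S * (P * F)ᴴ + P * T * Pᴴ = P * (K * Kᴴ) * Pᴴ := by
          simp only [hK, conjTranspose_mul, Matrix.mul_add, Matrix.add_mul, Matrix.mul_assoc]
      _ = 0 := by rw [← Matrix.mul_assoc, hPK, Matrix.zero_mul, Matrix.zero_mul]
  have hPFS := hS.mul_eq_zero_of_mul_mul_conjTranspose_eq_zero
    ((add_eq_zero_iff_of_nonneg (hS.mul_mul_conjTranspose_same (P * F)).nonneg
      (hT.mul_mul_conjTranspose_same P).nonneg).mp hsum).1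
  rw [Matrix.mul_assoc, Matrix.sub_mul, Matrix.one_mul, sub_eq_zero] at hPFS
  exact hPFS.symm

end RCLike

variable {R : Type*}

theorem mulVec_injective_of_rank_eq_card [Field R] {K : Matrix m p R}
    (hK : K.rank = Fintype.card p) : Function.Injective K.mulVec := by
  have hker := K.mulVecLin.finrank_range_add_finrank_ker
  rw [← rank, hK, Module.finrank_fintype_fun_eq_card, add_eq_left,
    Submodule.finrank_eq_zero] at hker
  exact LinearMap.ker_eq_bot.mp hker

theorem mul_eq_one_of_mul_mul_eq_self [Fintype m] [Field R] [DecidableEq p] {K : Matrix m p R}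
    {Kd : Matrix p m R} (hK : K.rank = Fintype.card p) (h : K * Kd * K = K) : Kd * K = 1 := by
  refine toLin'.injective (LinearMap.ext fun v => mulVec_injective_of_rank_eq_card hK ?_)
  simp only [toLin'_apply, mulVec_mulVec, ← Matrix.mul_assoc, h, Matrix.mul_one]

theorem sub_one_mul_mul_transpose_add_eq [Fintype m] [CommRing R] [DecidableEq n] {A : Matrix n m R}
    {F : Matrix m n R} {K : Matrix m p R} {G : Matrix n p R} {S : Matrix n n R}
    {T : Matrix m m R} (hS : Sᵀ = S) (hK : K * Kᵀ = F * S * Fᵀ + T) (hKG : K * Gᵀ = F * S) :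
    (A * F - 1) * S * (A * F - 1)ᵀ + A * T * Aᵀ = (A * K - G) * (A * K - G)ᵀ - G * Gᵀ + S := by
  have hGK : G * Kᵀ = S * Fᵀ := by
    rw [← transpose_transpose (G * Kᵀ), transpose_mul, transpose_transpose, hKG, transpose_mul,
      hS]
  calc (A * F - 1) * S * (A * F - 1)ᵀ + A * T * Aᵀ
        = A * (F * S * Fᵀ + T) * Aᵀ - A * (F * S) - S * Fᵀ * Aᵀ + S := by
        simp only [transpose_sub, transpose_mul, transpose_one, Matrix.sub_mul, Matrix.mul_sub,
          Matrix.add_mul, Matrix.mul_add, Matrix.one_mul, Matrix.mul_one, Matrix.mul_assoc]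
        abel
    _ = A * (K * Kᵀ) * Aᵀ - A * (K * Gᵀ) - G * Kᵀ * Aᵀ + S := by rw [hK, hKG, hGK]
    _ = (A * K - G) * (A * K - G)ᵀ - G * Gᵀ + S := by
        simp only [transpose_sub, transpose_mul, Matrix.sub_mul, Matrix.mul_sub,
          Matrix.mul_assoc]
        abel

end Matrix

section Covariance

open ProbabilityTheory

variable {Ω : Type} [MeasurableSpace Ω] {μ : Measure Ω} {k l : ℕ}

theorem MeasureTheory.MemLp.matrix_mulVec {ι κ : Type*} [Fintype ι] [Fintype κ] {q : ENNReal}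
    {Z : Ω → κ → ℝ} (hZ : MemLp Z q μ) (A : Matrix ι κ ℝ) : MemLp (fun ω => A *ᵥ Z ω) q μ :=
  (LinearMap.toContinuousLinearMap A.mulVecLin).comp_memLp' hZ

theorem integral_matrix_mulVec {ι κ : Type*} [Fintype ι] [Fintype κ] {Z : Ω → κ → ℝ}
    (hZ : Integrable Z μ) (A : Matrix ι κ ℝ) : ∫ ω, A *ᵥ Z ω ∂μ = A *ᵥ ∫ ω, Z ω ∂μ :=
  (LinearMap.toContinuousLinearMap A.mulVecLin).integral_comp_comm hZ

theorem covMatrix_apply (Z : Ω → Fin k → ℝ) (i j : Fin k) :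
    covMatrix μ Z i j = cov[fun ω => Z ω i, fun ω => Z ω j; μ] := rfl

theorem transpose_covMatrix (Z : Ω → Fin k → ℝ) : (covMatrix μ Z)ᵀ = covMatrix μ Z := by
  ext i j
  exact covariance_comm _ _

theorem covMatrix_mulVec [IsFiniteMeasure μ] {Z : Ω → Fin k → ℝ} (hZ : MemLp Z 2 μ)
    (A : Matrix (Fin l) (Fin k) ℝ) :
    covMatrix μ (fun ω => A *ᵥ Z ω) = A * covMatrix μ Z * Aᵀ := by
  ext i j
  simp only [covMatrix_apply, mulVec, dotProduct, mul_apply, transpose_apply]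
  rw [covariance_fun_sum_fun_sum (fun a => (hZ.eval a).const_mul _)
    (fun b => (hZ.eval b).const_mul _), Finset.sum_comm]
  simp only [covariance_const_mul_left,
    covariance_const_mul_right, Finset.sum_mul]
  exact Finset.sum_congr rfl fun _ _ => Finset.sum_congr rfl fun _ _ => by ring

theorem covMatrix_add_const [IsProbabilityMeasure μ] {Z : Ω → Fin k → ℝ} (hZ : Integrable Z μ)
    (c : Fin k → ℝ) : covMatrix μ (fun ω => Z ω + c) = covMatrix μ Z := by
  ext i j
  exact (covariance_add_const_left (hZ.eval i) _).trans
    (covariance_add_const_right (hZ.eval j) _)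

theorem covMatrix_add_of_indepFun [IsFiniteMeasure μ] {U V : Ω → Fin k → ℝ}
    (hU : MemLp U 2 μ) (hV : MemLp V 2 μ) (hUV : IndepFun U V μ) :
    covMatrix μ (fun ω => U ω + V ω) = covMatrix μ U + covMatrix μ V := by
  have hcross : ∀ i j, cov[fun ω => U ω i, fun ω => V ω j; μ] = 0 := fun i j =>
    (hUV.comp (measurable_pi_apply i) (measurable_pi_apply j)).covariance_eq_zero
      (hU.eval i) (hV.eval j)
  ext i j
  calc cov[fun ω => U ω i + V ω i, fun ω => U ω j + V ω j; μ]
      = cov[fun ω => U ω i, fun ω => U ω j + V ω j; μ]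
        + cov[fun ω => V ω i, fun ω => U ω j + V ω j; μ] :=
        covariance_add_left (hU.eval i) (hV.eval i) ((hU.eval j).add (hV.eval j))
    _ = (cov[fun ω => U ω i, fun ω => U ω j; μ] + cov[fun ω => U ω i, fun ω => V ω j; μ])
        + (cov[fun ω => V ω i, fun ω => U ω j; μ] + cov[fun ω => V ω i, fun ω => V ω j; μ]) := by
        congr 1
        · exact covariance_add_right (hU.eval i) (hU.eval j) (hV.eval j)
        · exact covariance_add_right (hV.eval i) (hU.eval j) (hV.eval j)
    _ = covMatrix μ U i j + covMatrix μ V i j := by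
        rw [hcross, covariance_comm (fun ω => V ω i), hcross, add_zero, zero_add]
        rfl

theorem covMatrix_mulVec_add_mulVec_of_indepFun [IsFiniteMeasure μ] {n : ℕ} {U : Ω → Fin k → ℝ}
    {V : Ω → Fin l → ℝ} (hU : MemLp U 2 μ) (hV : MemLp V 2 μ)
    (hUV : IndepFun U V μ) (B : Matrix (Fin n) (Fin k) ℝ)
    (C : Matrix (Fin n) (Fin l) ℝ) :
    covMatrix μ (fun ω => B *ᵥ U ω + C *ᵥ V ω)
      = B * covMatrix μ U * Bᵀ + C * covMatrix μ V * Cᵀ := by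
  rw [covMatrix_add_of_indepFun (hU.matrix_mulVec B) (hV.matrix_mulVec C)
    (hUV.comp (B.mulVecLin.continuous_of_finiteDimensional.measurable)
      (C.mulVecLin.continuous_of_finiteDimensional.measurable)),
    covMatrix_mulVec hU, covMatrix_mulVec hV]

theorem posSemidef_covMatrix [IsFiniteMeasure μ] {Z : Ω → Fin k → ℝ} (hZ : MemLp Z 2 μ) :
    (covMatrix μ Z).PosSemidef := by
  refine PosSemidef.of_dotProduct_mulVec_nonneg
    ((conjTranspose_eq_transpose_of_trivial _).trans (transpose_covMatrix Z)) fun x => ?_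
  have h := congr_fun (congr_fun (covMatrix_mulVec hZ (replicateRow (Fin 1) x)) 0) 0
  rw [covMatrix_apply, covariance_self
    ((hZ.matrix_mulVec _).eval 0).aemeasurable] at h
  simp only [mul_apply, replicateRow_apply, transpose_apply] at h
  rw [star_trivial, dotProduct_mulVec]
  simp only [dotProduct, vecMul, ← h]
  exact variance_nonneg _ _

theorem integral_sum_sq_eq_trace_covMatrix_add [IsProbabilityMeasure μ] {Z : Ω → Fin k → ℝ}
    (hZ : MemLp Z 2 μ) :
    ∫ ω, ∑ i, Z ω i ^ 2 ∂μ = trace (covMatrix μ Z) + ∑ i, (∫ ω, Z ω ∂μ) i ^ 2 := by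
  rw [integral_finsetSum _ fun i _ => (hZ.eval i).integrable_sq, trace, ← Finset.sum_add_distrib]
  refine Finset.sum_congr rfl fun i _ => ?_
  rw [diag_apply, covMatrix_apply, covariance_self (hZ.eval i).aemeasurable,
    variance_eq_sub (hZ.eval i), eval_integral (fun j => (hZ.eval j).integrable one_le_two)]
  simp only [Pi.pow_apply]
  ring

end Covariance

theorem frob_nonneg {m n : ℕ} (A : Matrix (Fin m) (Fin n) ℝ) : 0 ≤ frob A :=
  Real.sqrt_nonneg _

theorem frob_sq {m n : ℕ} (A : Matrix (Fin m) (Fin n) ℝ) : frob A ^ 2 = trace (A * Aᵀ) := by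
  rw [frob, Real.sq_sqrt (by positivity)]
  simp only [trace, diag_apply, mul_apply, transpose_apply, sq]

theorem frob_sub_comm {m n : ℕ} (A B : Matrix (Fin m) (Fin n) ℝ) :
    frob (A - B) = frob (B - A) := by
  simp only [frob, ← neg_sub A B, Matrix.neg_apply, neg_sq]

section LinearObservationModel

variable {Ω : Type} [MeasurableSpace Ω] {μ : Measure Ω} [IsProbabilityMeasure μ] {n m : ℕ}
  {X : Ω → Fin n → ℝ} {ε : Ω → Fin m → ℝ}

theorem integral_sum_sq_affine_error_eq (hX : MemLp X 2 μ) (hε : MemLp ε 2 μ)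
    (hindep : ProbabilityTheory.IndepFun X ε μ) (hmean : ∫ ω, ε ω ∂μ = 0)
    (F : Matrix (Fin m) (Fin n) ℝ) (A : Matrix (Fin n) (Fin m) ℝ) (b : Fin n → ℝ) :
    ∫ ω, ∑ i, (A *ᵥ (F *ᵥ X ω + ε ω) + b - X ω) i ^ 2 ∂μ
      = trace ((A * F - 1) * covMatrix μ X * (A * F - 1)ᵀ + A * covMatrix μ ε * Aᵀ)
        + ∑ i, ((A * F - 1) *ᵥ (∫ ω, X ω ∂μ) + b : Fin n → ℝ) i ^ 2 := by
  set Z : Ω → Fin n → ℝ := fun ω => (A * F - 1) *ᵥ X ω + A *ᵥ ε ω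
  have hXc : MemLp (fun ω => (A * F - 1) *ᵥ X ω) 2 μ :=
    hX.matrix_mulVec (A * F - 1 : Matrix (Fin n) (Fin n) ℝ)
  have hZ : MemLp Z 2 μ := hXc.add (hε.matrix_mulVec A)
  have herr : ∀ ω, A *ᵥ (F *ᵥ X ω + ε ω) + b - X ω = Z ω + b := fun ω => by
    simp only [Z, mulVec_add, sub_mulVec, one_mulVec, mulVec_mulVec]
    abel
  have hmeanZ : ∫ ω, Z ω + b ∂μ = (A * F - 1) *ᵥ (∫ ω, X ω ∂μ) + b := by
    rw [integral_add (hZ.integrable one_le_two) (integrable_const b), integral_const, integral_add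
      (hXc.integrable one_le_two) ((hε.matrix_mulVec A).integrable one_le_two),
      integral_matrix_mulVec (hX.integrable one_le_two),
      integral_matrix_mulVec (hε.integrable one_le_two), hmean, mulVec_zero, add_zero]
    simp
  have hZb : MemLp (fun ω => Z ω + b) 2 μ := hZ.add (memLp_const b)
  simp only [herr]
  rw [integral_sum_sq_eq_trace_covMatrix_add hZb,
    covMatrix_add_const (hZ.integrable one_le_two) b,
    covMatrix_mulVec_add_mulVec_of_indepFun hX hε hindep, hmeanZ]

theorem integral_sum_sq_affine_error_eq_frob_sq {p : ℕ} (hX : MemLp X 2 μ) (hε : MemLp ε 2 μ)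
    (hindep : ProbabilityTheory.IndepFun X ε μ) (hmean : ∫ ω, ε ω ∂μ = 0)
    {F : Matrix (Fin m) (Fin n) ℝ} {KY : Matrix (Fin m) (Fin p) ℝ} {KYd : Matrix (Fin p) (Fin m) ℝ}
    (hKY : covMatrix μ (fun ω => F *ᵥ X ω + ε ω) = KY * KYᵀ)
    (hKYd : KY * KYd * KY = KY) (A : Matrix (Fin n) (Fin m) ℝ) (b : Fin n → ℝ) :
    ∫ ω, ∑ i, (A *ᵥ (F *ᵥ X ω + ε ω) + b - X ω) i ^ 2 ∂μ
      = frob (A * KY - covMatrix μ X * Fᵀ * KYdᵀ) ^ 2 - frob (covMatrix μ X * Fᵀ * KYdᵀ) ^ 2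
        + trace (covMatrix μ X) + ∑ i, ((A * F - 1) *ᵥ (∫ ω, X ω ∂μ) + b : Fin n → ℝ) i ^ 2 := by
  have hSY : KY * KYᵀ = F * covMatrix μ X * Fᵀ + covMatrix μ ε := by
    have h := covMatrix_mulVec_add_mulVec_of_indepFun hX hε hindep F 1
    simp only [one_mulVec, Matrix.one_mul, transpose_one, Matrix.mul_one] at h
    rw [← hKY, h]
  have hKG : KY * (covMatrix μ X * Fᵀ * KYdᵀ)ᵀ = F * covMatrix μ X := by
    rw [transpose_mul, transpose_mul, transpose_transpose, transpose_transpose, transpose_covMatrix,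
      ← Matrix.mul_assoc]
    exact mul_mul_mul_eq_of_mul_conjTranspose_eq_add hKYd (posSemidef_covMatrix hX)
      (posSemidef_covMatrix hε) (by simpa using hSY)
  rw [integral_sum_sq_affine_error_eq hX hε hindep hmean,
    sub_one_mul_mul_transpose_add_eq (transpose_covMatrix X) hSY hKG, trace_add, trace_sub,
    frob_sq, frob_sq]

end LinearObservationModel

/-- Affine linear inverse end-to-end problem: `Â = (S_X Fᵀ (K_Y†)ᵀ)_r K_Y†` together
with `b̂ = (Iₙ − Â F) μ_X` minimizes `E‖A Y + b − X‖₂²` over `rank(A) ≤ r` and `b`. -/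
theorem affine_inverse_end_to_end_optimal {Ω : Type} [MeasurableSpace Ω]
    (μ : Measure Ω) [IsProbabilityMeasure μ] {n m p r : ℕ}
    (X : Ω → Fin n → ℝ) (ε : Ω → Fin m → ℝ)
    (hX : MemLp X 2 μ) (hε : MemLp ε 2 μ)
    (hindep : ProbabilityTheory.IndepFun X ε μ)
    (hmean : (∫ ω, ε ω ∂μ) = 0)
    (F : Matrix (Fin m) (Fin n) ℝ)
    (KY : Matrix (Fin m) (Fin p) ℝ) (hKYrank : KY.rank = p)
    (hKY : covMatrix μ (fun ω => F *ᵥ X ω + ε ω) = KY * KYᵀ)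
    (KYd : Matrix (Fin p) (Fin m) ℝ) (hKYd : IsMoorePenrose KY KYd)
    (M : Matrix (Fin n) (Fin p) ℝ)
    (hMrank : M.rank ≤ r)
    (hMbest : ∀ N : Matrix (Fin n) (Fin p) ℝ, N.rank ≤ r →
      frob (covMatrix μ X * Fᵀ * KYdᵀ - M) ≤ frob (covMatrix μ X * Fᵀ * KYdᵀ - N)) :
    (M * KYd).rank ≤ r ∧
      ∀ A : Matrix (Fin n) (Fin m) ℝ, A.rank ≤ r → ∀ b : Fin n → ℝ,
        ∫ ω, ∑ i, ((M * KYd) *ᵥ (F *ᵥ X ω + ε ω)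
              + ((1 : Matrix (Fin n) (Fin n) ℝ) - M * KYd * F) *ᵥ (∫ ω', X ω' ∂μ)
              - X ω) i ^ 2 ∂μ
          ≤ ∫ ω, ∑ i, (A *ᵥ (F *ᵥ X ω + ε ω) + b - X ω) i ^ 2 ∂μ := by
  obtain ⟨hKYdKY, -, -, -⟩ := hKYd
  have hKdK : KYd * KY = 1 := mul_eq_one_of_mul_mul_eq_self (by simpa using hKYrank) hKYdKY
  set G := covMatrix μ X * Fᵀ * KYdᵀ
  refine ⟨(rank_mul_le_left _ _).trans hMrank, fun A hA b => ?_⟩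
  have hbias : (M * KYd * F - 1) *ᵥ (∫ ω, X ω ∂μ) + (1 - M * KYd * F) *ᵥ (∫ ω, X ω ∂μ) = 0 := by
    rw [← add_mulVec, sub_add_sub_cancel', sub_self, zero_mulVec]
  have hbest : frob (M - G) ^ 2 ≤ frob (A * KY - G) ^ 2 := by
    rw [frob_sub_comm, frob_sub_comm (A * KY)]
    exact pow_le_pow_left₀ (frob_nonneg _) (hMbest _ ((rank_mul_le_left _ _).trans hA)) 2
  rw [integral_sum_sq_affine_error_eq_frob_sq hX hε hindep hmean hKY hKYdKY,
    integral_sum_sq_affine_error_eq_frob_sq hX hε hindep hmean hKY hKYdKY, Matrix.mul_assoc M,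
    hKdK, Matrix.mul_one, hbias]
  simp only [Pi.zero_apply, zero_pow two_ne_zero, Finset.sum_const_zero, add_zero]
  exact le_add_of_le_of_nonneg (by linarith) (Finset.sum_nonneg fun i _ => sq_nonneg _)
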